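/- Let d ≥ 1, let K : ℝ^d → [0,∞) be a measurable even kernel with ∫_{ℝ^d} K(x)|x| dx < ∞, let p̂ ∈ S^{d−1}, set H := {x ∈ ℝ^d : x·p̂ > 0}, and let δ ∈ (0,1). Let (E_ε)_{ε>0} be a family of measurable subsets of ℝ^d such that E_ε Δ H ⊂ B_{1−δ} for every ε > 0 and χ_{E_ε} → χ_H in L¹(B) as ε → 0⁺. Then liminf_{ε→0⁺} (1/ε)(J¹_ε(E_ε;B) − J¹_ε(H;B)) ≥ 0. -/

import Mathlib

open MeasureTheory ENNReal Topology Filter RealInnerProductSpace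

/-- Euclidean space `ℝ^d`. -/
abbrev Ed (d : ℕ) := EuclideanSpace ℝ (Fin d)

/-- The rescaled kernel `K_ε(x) = ε^{−d} K(x/ε)`. -/
noncomputable def Keps {d : ℕ} (K : Ed d → ℝ) (ε : ℝ) (x : Ed d) : ℝ :=
  (ε ^ d)⁻¹ * K (ε⁻¹ • x)

/-- The interaction energy
`J¹_ε(E；B) = (1/2)∫_B∫_B K_ε(y−x)|χ_E(y)−χ_E(x)| dy dx`, `B` the unit ball. -/
noncomputable def J1eps {d : ℕ} (K : Ed d → ℝ) (ε : ℝ) (E : Set (Ed d)) : ℝ≥0∞ :=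
  (1 / 2) * ∫⁻ x in Metric.ball (0 : Ed d) 1, ∫⁻ y in Metric.ball (0 : Ed d) 1,
    ENNReal.ofReal (Keps K ε (y - x)) *
      ENNReal.ofReal |E.indicator (fun _ => (1 : ℝ)) y - E.indicator (fun _ => (1 : ℝ)) x|

/-!
Write `J¹_ε(E;B) = ½ ∫ K_ε(z) G_E(z) dz` with `G_E(z) = ∫_{B ∩ (B - z)} |χ_E(x + z) - χ_E(x)| dx`.
For `|z| < δ` both `B ∩ (B - z)` and its translate by `z` contain `B_{1-δ}`, which carries
`χ_E - χ_H`; hence `∫_{B ∩ (B - z)} (χ_E(x + z) - χ_E(x)) dx` is the same for `E` and for `H`.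
As `χ_H(x + z) - χ_H(x)` has constant sign in `x`, this gives `G_H(z) ≤ G_E(z)`.
For `|z| ≥ δ` only `G_H(z) ≤ 2^d |z|` is used (the integrand lives in a slab of width `|z|`), and
rescaling `z = ε w` turns the remainder into `2^(d-1) ε ∫_{|w| ≥ δ/ε} K(w) |w| dw = o(ε)`.
The same slab bound makes `J¹_ε(H;B)` finite, so `ε⁻¹ (J¹_ε(E_ε;B) - J¹_ε(H;B))` never meets
`⊤ - ⊤ = ⊥` in `EReal`.
-/

open Metric

local notation "χ[" E "]" => Set.indicator E (fun _ => (1 : ℝ))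

theorem abs_indicator_one_sub_le {α : Type*} (s t : Set α) (x y : α) : |χ[s] x - χ[t] y| ≤ 1 := by
  by_cases hx : x ∈ s <;> by_cases hy : y ∈ t <;> simp [hx, hy]

theorem mem_symmDiff_of_indicator_one_sub_ne_zero {α : Type*} {s t : Set α} {x : α}
    (h : χ[s] x - χ[t] x ≠ 0) : x ∈ symmDiff s t := by
  by_cases hs : x ∈ s <;> by_cases ht : x ∈ t <;> simp_all [Set.mem_symmDiff]

section Translation

variable {G : Type*} [AddGroup G] [MeasurableSpace G] [MeasurableAdd G] {μ : Measure G}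
  [μ.IsAddRightInvariant]

theorem setIntegral_comp_add_right_sub_eq_zero {F : Type*} [NormedAddCommGroup F]
    [NormedSpace ℝ F] {f : G → F} (hf : Integrable f μ) {S : Set G} {z : G}
    (hS : ∀ x, f x ≠ 0 → x ∈ S ∧ x - z ∈ S) :
    ∫ x in S, (f (x + z) - f x) ∂μ = 0 := by
  have h_shift : ∫ x in S, f (x + z) ∂μ = ∫ x, f x ∂μ := by
    rw [setIntegral_eq_integral_of_forall_compl_eq_zero, integral_add_right_eq_self]
    intro x hx
    by_contra h
    exact hx (add_sub_cancel_right x z ▸ (hS _ h).2)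
  have h_id : ∫ x in S, f x ∂μ = ∫ x, f x ∂μ :=
    setIntegral_eq_integral_of_forall_compl_eq_zero fun x hx => by_contra fun h => hx (hS x h).1
  rw [integral_sub (hf.comp_add_right z).integrableOn hf.integrableOn, h_shift, h_id, sub_self]

theorem setLIntegral_abs_indicator_shift_le {S E H : Set G} (hS : μ S ≠ ∞)
    (hE : MeasurableSet E) (hH : MeasurableSet H) {z : G}
    (hEH : ∀ x ∈ symmDiff E H, x ∈ S ∧ x - z ∈ S)
    (hHz : (∀ x ∈ H, x + z ∈ H) ∨ ∀ x, x + z ∈ H → x ∈ H) :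
    ∫⁻ x in S, ENNReal.ofReal |χ[H] (x + z) - χ[H] x| ∂μ
      ≤ ∫⁻ x in S, ENNReal.ofReal |χ[E] (x + z) - χ[E] x| ∂μ := by
  have h_int : ∀ {F : Set G}, MeasurableSet F → IntegrableOn (fun x => χ[F] (x + z) - χ[F] x) S μ :=
    fun hF => Measure.integrableOn_of_bounded hS
      (((measurable_const.indicator hF).comp (measurable_add_const z)).sub
        (measurable_const.indicator hF)).aestronglyMeasurable
      (M := 1) (.of_forall fun x => abs_indicator_one_sub_le _ _ _ _)
  have h_diff : Integrable (fun x => χ[E] x - χ[H] x) μ :=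
    (integrableOn_iff_integrable_of_support_subset fun x hx =>
      (hEH x (mem_symmDiff_of_indicator_one_sub_ne_zero hx)).1).mp
      (Measure.integrableOn_of_bounded hS
        ((measurable_const.indicator hE).sub (measurable_const.indicator hH)).aestronglyMeasurable
        (M := 1) (.of_forall fun x => abs_indicator_one_sub_le _ _ _ _))
  have h_same : ∫ x in S, (χ[H] (x + z) - χ[H] x) ∂μ = ∫ x in S, (χ[E] (x + z) - χ[E] x) ∂μ := by
    have := setIntegral_comp_add_right_sub_eq_zero h_diff fun x hx =>
      hEH x (mem_symmDiff_of_indicator_one_sub_ne_zero hx)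
    rw [eq_comm, ← sub_eq_zero, ← integral_sub (h_int hE) (h_int hH)]
    simpa only [sub_sub_sub_comm] using this
  have h_sign : ∫ x in S, |χ[H] (x + z) - χ[H] x| ∂μ = |∫ x in S, (χ[H] (x + z) - χ[H] x) ∂μ| := by
    have h_nonneg : ∀ x, 0 ≤ χ[H] x := Set.indicator_nonneg fun _ _ => zero_le_one
    rcases hHz with hHz | hHz
    · have h : 0 ≤ fun x => χ[H] (x + z) - χ[H] x := fun x => by
        by_cases hx : x ∈ H <;> simp [hx, hHz x, h_nonneg]
      rw [abs_of_nonneg (integral_nonneg h)]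
      exact integral_congr_ae (.of_forall fun x => abs_of_nonneg (h x))
    · have h : (fun x => χ[H] (x + z) - χ[H] x) ≤ 0 := fun x => by
        by_cases hx : x + z ∈ H <;> simp [hx, hHz x, h_nonneg]
      rw [abs_of_nonpos (integral_nonpos h), ← integral_neg]
      exact integral_congr_ae (.of_forall fun x => abs_of_nonpos (h x))
  simp_rw [← Real.enorm_eq_ofReal_abs, ← ofReal_integral_norm_eq_lintegral_enorm (h_int hH),
    ← ofReal_integral_norm_eq_lintegral_enorm (h_int hE), Real.norm_eq_abs, h_sign, h_same]
  exact ENNReal.ofReal_le_ofReal abs_integral_le_integral_abs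

end Translation

section Energy

variable {d : ℕ}

theorem measurable_Keps {K : Ed d → ℝ} (hK : Measurable K) (ε : ℝ) : Measurable (Keps K ε) := by
  unfold Keps; fun_prop

noncomputable def shiftVariation (E : Set (Ed d)) (z : Ed d) : ℝ≥0∞ :=
  ∫⁻ x in (· + z) ⁻¹' ball 0 1 ∩ ball 0 1, ENNReal.ofReal |χ[E] (x + z) - χ[E] x|

theorem J1eps_eq_lintegral_shiftVariation {K : Ed d → ℝ} (hK : Measurable K) (ε : ℝ)
    {E : Set (Ed d)} (hE : MeasurableSet E) :
    J1eps K ε E = 2⁻¹ * ∫⁻ z, ENNReal.ofReal (Keps K ε z) * shiftVariation E z := by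
  set φ : Ed d → Ed d → ℝ≥0∞ := fun x z => (ball (0 : Ed d) 1).indicator 1 (x + z) *
    (ENNReal.ofReal (Keps K ε z) * ENNReal.ofReal |χ[E] (x + z) - χ[E] x|)
  have h_inner (x : Ed d) : ∫⁻ y in ball 0 1, ENNReal.ofReal (Keps K ε (y - x)) *
      ENNReal.ofReal |χ[E] y - χ[E] x| = ∫⁻ z, φ x z := by
    rw [← lintegral_indicator measurableSet_ball, ← lintegral_add_left_eq_self _ x]
    congr 1 with z
    by_cases h : x + z ∈ ball (0 : Ed d) 1
    · simp only [φ, Set.indicator_of_mem h, add_sub_cancel_left, Pi.one_apply, one_mul]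
    · simp only [φ, Set.indicator_of_notMem h, zero_mul]
  have h_meas : AEMeasurable (Function.uncurry φ) ((volume.restrict (ball 0 1)).prod volume) := by
    have := measurable_Keps hK ε
    simp only [φ, Function.uncurry_def]
    fun_prop (disch := measurability)
  rw [J1eps, one_div]
  simp_rw [h_inner]
  rw [lintegral_lintegral_swap h_meas]
  congr 1
  refine lintegral_congr fun z => ?_
  rw [shiftVariation,
    ← setLIntegral_indicator (measurableSet_ball.preimage (measurable_add_const z)),
    ← lintegral_const_mul' _ _ ofReal_ne_top]
  refine lintegral_congr fun x => ?_
  by_cases h : x + z ∈ ball (0 : Ed d) 1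
  · simp only [φ, Set.indicator_of_mem h, Pi.one_apply, one_mul,
      Set.indicator_of_mem (show x ∈ (· + z) ⁻¹' ball 0 1 from h)]
  · simp only [φ, Set.indicator_of_notMem h, zero_mul,
      Set.indicator_of_notMem (show x ∉ (· + z) ⁻¹' ball 0 1 from h), mul_zero]

end Energy

section Halfspace

theorem halfspace_add_mem_or {F : Type*} [NormedAddCommGroup F] [InnerProductSpace ℝ F]
    (p z : F) :
    (∀ x ∈ {x : F | 0 < ⟪x, p⟫}, x + z ∈ {x : F | 0 < ⟪x, p⟫}) ∨
      ∀ x, x + z ∈ {x : F | 0 < ⟪x, p⟫} → x ∈ {x : F | 0 < ⟪x, p⟫} := by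
  simp only [Set.mem_ofPred_eq, inner_add_left]
  rcases le_or_gt 0 ⟪z, p⟫ with h | h
  · exact .inl fun x hx => by linarith
  · exact .inr fun x hx => by linarith

theorem ofReal_abs_indicator_halfspace_shift_le {F : Type*} [NormedAddCommGroup F]
    [InnerProductSpace ℝ F] (p x z : F) :
    ENNReal.ofReal |χ[{x : F | 0 < ⟪x, p⟫}] (x + z) - χ[{x : F | 0 < ⟪x, p⟫}] x|
      ≤ {x : F | |⟪x, p⟫| ≤ |⟪z, p⟫|}.indicator 1 x := by
  by_cases hx : |⟪x, p⟫| ≤ |⟪z, p⟫|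
  · rw [Set.indicator_of_mem (show x ∈ {x : F | |⟪x, p⟫| ≤ |⟪z, p⟫|} from hx), Pi.one_apply]
    exact ENNReal.ofReal_le_one.mpr (abs_indicator_one_sub_le _ _ _ _)
  · have h_iff : 0 < ⟪x + z, p⟫ ↔ 0 < ⟪x, p⟫ := by
      rw [inner_add_left]
      rcases lt_abs.mp (not_le.mp hx) with h | h <;>
        constructor <;> intro <;> linarith [neg_abs_le ⟪z, p⟫, le_abs_self ⟪z, p⟫]
    simp [Set.indicator_apply, h_iff]

variable {d : ℕ} {p : Ed d}

theorem volume_abs_inner_le_inter_ball_le (hp : ‖p‖ = 1) {r : ℝ} (hr : 0 ≤ r) :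
    volume ({x : Ed d | |⟪x, p⟫| ≤ r} ∩ ball 0 1) ≤ ENNReal.ofReal (2 ^ d * r) := by
  obtain ⟨i₀⟩ : Nonempty (Fin d) := by
    rcases d.eq_zero_or_pos with rfl | hd
    · simp [Subsingleton.elim p 0] at hp
    · exact ⟨⟨0, hd⟩⟩
  set e : Ed d := EuclideanSpace.single i₀ 1
  set T := Submodule.reflection (ℝ ∙ (e - p))ᗮ
  have hTe : T e = p := Submodule.reflection_sub (by simp [e, hp])
  set b : Fin d → ℝ := fun i => if i = i₀ then r else 1
  have h_sub : T ⁻¹' ({x | |⟪x, p⟫| ≤ r} ∩ ball 0 1) ⊆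
      (MeasurableEquiv.toLp 2 (Fin d → ℝ)).symm ⁻¹' Set.Icc (-b) b := by
    rintro y ⟨hyp, hy⟩
    have hy : ‖y‖ < 1 := by simpa using hy
    have hyp : |y i₀| ≤ r := by
      change |⟪T y, p⟫| ≤ r at hyp
      rwa [← hTe, T.inner_map_map, EuclideanSpace.inner_single_right,
        conj_trivial, one_mul] at hyp
    have hyi (i : Fin d) : |y i| ≤ 1 := by simpa using (PiLp.norm_apply_le y i).trans hy.le
    refine ⟨fun i => ?_, fun i => ?_⟩ <;> by_cases hi : i = i₀ <;>
      simp only [b, hi, if_true, if_false, Pi.neg_apply] <;> first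
        | exact (abs_le.mp hyp).1 | exact (abs_le.mp hyp).2
        | exact (abs_le.mp (hyi i)).1 | exact (abs_le.mp (hyi i)).2
  have h_meas : MeasurableSet ({x : Ed d | |⟪x, p⟫| ≤ r} ∩ ball 0 1) :=
    (measurableSet_le (by fun_prop) measurable_const).inter measurableSet_ball
  calc volume ({x : Ed d | |⟪x, p⟫| ≤ r} ∩ ball 0 1)
      = volume (T ⁻¹' ({x | |⟪x, p⟫| ≤ r} ∩ ball 0 1)) :=
        (T.measurePreserving.measure_preimage h_meas.nullMeasurableSet).symm
    _ ≤ volume (Set.Icc (-b) b) :=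
        (measure_mono h_sub).trans_eq <|
          (EuclideanSpace.volume_preserving_symm_measurableEquiv_toLp _).measure_preimage
            measurableSet_Icc.nullMeasurableSet
    _ = ENNReal.ofReal (2 ^ d * r) := by
        rw [Real.volume_Icc_pi, ← ENNReal.ofReal_prod_of_nonneg fun i _ => by
          simp only [b, Pi.neg_apply, sub_neg_eq_add]; split_ifs <;> linarith]
        congr 1
        simp only [b, Pi.neg_apply, sub_neg_eq_add, ← two_mul, Finset.prod_mul_distrib,
          Finset.prod_const, Finset.card_univ, Fintype.card_fin, Fintype.prod_ite_eq']

theorem shiftVariation_halfspace_le_of_symmDiff_subset {δ : ℝ} {E : Set (Ed d)}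
    (hE : MeasurableSet E) (hEH : symmDiff E {x | 0 < ⟪x, p⟫} ⊆ closedBall 0 (1 - δ))
    {z : Ed d} (hz : ‖z‖ < δ) :
    shiftVariation {x : Ed d | 0 < ⟪x, p⟫} z ≤ shiftVariation E z := by
  refine setLIntegral_abs_indicator_shift_le
    ((measure_mono Set.inter_subset_right).trans_lt measure_ball_lt_top).ne hE
    (measurableSet_lt measurable_const (by fun_prop)) (fun x hx => ?_) (halfspace_add_mem_or p z)
  have hx : ‖x‖ ≤ 1 - δ := mem_closedBall_zero_iff.mp (hEH hx)
  simp only [Set.mem_inter_iff, Set.mem_preimage, mem_ball_zero_iff, sub_add_cancel]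
  refine ⟨⟨?_, ?_⟩, ?_, ?_⟩ <;> linarith [norm_add_le x z, norm_sub_le x z, norm_nonneg z]

theorem shiftVariation_halfspace_le_norm (hp : ‖p‖ = 1) (z : Ed d) :
    shiftVariation {x : Ed d | 0 < ⟪x, p⟫} z ≤ ENNReal.ofReal (2 ^ d * ‖z‖) := by
  have h_meas : MeasurableSet {x : Ed d | |⟪x, p⟫| ≤ |⟪z, p⟫|} :=
    measurableSet_le (by fun_prop) measurable_const
  calc shiftVariation {x : Ed d | 0 < ⟪x, p⟫} z
      ≤ ∫⁻ x in (· + z) ⁻¹' ball 0 1 ∩ ball 0 1, {x | |⟪x, p⟫| ≤ |⟪z, p⟫|}.indicator 1 x :=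
        lintegral_mono fun x => ofReal_abs_indicator_halfspace_shift_le p x z
    _ ≤ ∫⁻ x in ball 0 1, {x | |⟪x, p⟫| ≤ |⟪z, p⟫|}.indicator 1 x :=
        lintegral_mono_set Set.inter_subset_right
    _ = volume ({x | |⟪x, p⟫| ≤ |⟪z, p⟫|} ∩ ball 0 1) := by
        rw [lintegral_indicator_one h_meas, Measure.restrict_apply h_meas]
    _ ≤ ENNReal.ofReal (2 ^ d * |⟪z, p⟫|) := volume_abs_inner_le_inter_ball_le hp (abs_nonneg _)
    _ ≤ ENNReal.ofReal (2 ^ d * ‖z‖) := by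
        gcongr
        simpa [hp] using abs_real_inner_le_norm z p

end Halfspace

section Kernel

variable {d : ℕ} {K : Ed d → ℝ} {ε : ℝ}

theorem lintegral_ofReal_Keps_mul (hε : 0 < ε) (f : Ed d → ℝ≥0∞) :
    ∫⁻ z, ENNReal.ofReal (Keps K ε z) * f z = ∫⁻ w, ENNReal.ofReal (K w) * f (ε • w) := by
  have hεd : 0 < ε ^ d := pow_pos hε d
  have h_map :
      Measure.map (ε⁻¹ • ·) (volume : Measure (Ed d)) = ENNReal.ofReal (ε ^ d) • volume := by
    rw [Measure.map_addHaar_smul _ (inv_ne_zero hε.ne'), finrank_euclideanSpace_fin, inv_pow,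
      inv_inv, abs_of_pos hεd]
  calc ∫⁻ z, ENNReal.ofReal (Keps K ε z) * f z
      = ∫⁻ z, ENNReal.ofReal (ε ^ d)⁻¹ * (ENNReal.ofReal (K (ε⁻¹ • z)) * f (ε • ε⁻¹ • z)) := by
        refine lintegral_congr fun z => ?_
        rw [Keps, ENNReal.ofReal_mul (inv_nonneg.mpr hεd.le), smul_inv_smul₀ hε.ne', mul_assoc]
    _ = ENNReal.ofReal (ε ^ d)⁻¹ * ∫⁻ w, ENNReal.ofReal (K w) * f (ε • w)
          ∂Measure.map (ε⁻¹ • ·) volume := by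
        rw [lintegral_const_mul' _ _ ofReal_ne_top]
        exact congrArg _ (lintegral_map_equiv (fun w => ENNReal.ofReal (K w) * f (ε • w))
          (MeasurableEquiv.smul₀ (α := Ed d) ε⁻¹ (inv_ne_zero hε.ne'))).symm
    _ = ∫⁻ w, ENNReal.ofReal (K w) * f (ε • w) := by
        rw [h_map, lintegral_smul_measure, smul_eq_mul, ← mul_assoc, ← ENNReal.ofReal_mul
          (inv_nonneg.mpr hεd.le), inv_mul_cancel₀ hεd.ne', ENNReal.ofReal_one, one_mul]

theorem lintegral_ofReal_Keps_mul_indicator_norm (hε : 0 < ε) (c R : ℝ) :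
    ∫⁻ z, ENNReal.ofReal (Keps K ε z) *
        {z | R ≤ ‖z‖}.indicator (fun z => ENNReal.ofReal (c * ‖z‖)) z
      = ENNReal.ofReal (c * ε) * ∫⁻ w in {w | R / ε ≤ ‖w‖}, ENNReal.ofReal (K w * ‖w‖) := by
  rw [lintegral_ofReal_Keps_mul hε, ← lintegral_indicator (measurableSet_le measurable_const
    measurable_norm), ← lintegral_const_mul' _ _ ofReal_ne_top]
  refine lintegral_congr fun w => ?_
  have h_norm : ‖ε • w‖ = ε * ‖w‖ := by rw [norm_smul, Real.norm_of_nonneg hε.le]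
  have h_mem : ε • w ∈ {z : Ed d | R ≤ ‖z‖} ↔ w ∈ {w : Ed d | R / ε ≤ ‖w‖} := by
    simp only [Set.mem_ofPred_eq, h_norm, div_le_iff₀' hε]
  by_cases hw : w ∈ {w : Ed d | R / ε ≤ ‖w‖}
  · rw [Set.indicator_of_mem (h_mem.mpr hw), Set.indicator_of_mem hw, h_norm, ← mul_assoc,
      ENNReal.ofReal_mul' (norm_nonneg w), ENNReal.ofReal_mul' (norm_nonneg w)]
    ring
  · rw [Set.indicator_of_notMem (mt h_mem.mp hw), Set.indicator_of_notMem hw, mul_zero, mul_zero]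

end Kernel

theorem tendsto_setLIntegral_le_norm_atTop {E : Type*} [NormedAddCommGroup E] [MeasurableSpace E]
    [OpensMeasurableSpace E] {μ : Measure E} {f : E → ℝ≥0∞} (hf : AEMeasurable f μ)
    (hfi : ∫⁻ x, f x ∂μ ≠ ∞) :
    Tendsto (fun R : ℝ => ∫⁻ x in {x | R ≤ ‖x‖}, f x ∂μ) atTop (𝓝 0) := by
  have h_set (R : ℝ) : MeasurableSet {x : E | R ≤ ‖x‖} :=
    measurableSet_le measurable_const measurable_norm
  simp_rw [← lintegral_indicator (h_set _)]
  simpa using tendsto_lintegral_filter_of_dominated_convergence' (f := fun _ => 0) f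
    (.of_forall fun R => hf.indicator (h_set R))
    (.of_forall fun R => .of_forall fun x => Set.indicator_le_self _ _ x) hfi
    (.of_forall fun x => tendsto_const_nhds.congr' <| eventually_atTop.mpr
      ⟨‖x‖ + 1, fun R hR => (Set.indicator_of_notMem
        (show x ∉ {x : E | R ≤ ‖x‖} from not_le.mpr (by linarith : ‖x‖ < R)) _).symm⟩)

theorem zero_le_liminf_inv_mul_sub {a b r : ℝ → ℝ≥0∞}
    (hb : ∀ᶠ ε in 𝓝[>] 0, b ε ≠ ∞) (hr : Tendsto r (𝓝[>] 0) (𝓝 0))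
    (hab : ∀ᶠ ε in 𝓝[>] 0, b ε ≤ a ε + ENNReal.ofReal ε * r ε) :
    (0 : EReal) ≤
      liminf (fun ε => ((ε⁻¹ : ℝ) : EReal) * ((a ε : EReal) - (b ε : EReal))) (𝓝[>] 0) := by
  have h_bound : ∀ᶠ ε in 𝓝[>] 0,
      ((-(r ε).toReal : ℝ) : EReal) ≤ ((ε⁻¹ : ℝ) : EReal) * ((a ε : EReal) - (b ε : EReal)) := by
    filter_upwards [self_mem_nhdsWithin, hb, hr.eventually_ne zero_ne_top, hab]
      with ε (hε : 0 < ε) hb hr hab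
    by_cases ha : a ε = ∞
    · rw [ha, ← EReal.coe_ennreal_toReal hb, EReal.coe_ennreal_top, EReal.top_sub_coe,
        EReal.coe_mul_top_of_pos (inv_pos.mpr hε)]
      exact le_top
    · rw [← EReal.coe_ennreal_toReal ha, ← EReal.coe_ennreal_toReal hb, ← EReal.coe_sub,
        ← EReal.coe_mul, EReal.coe_le_coe_iff, le_inv_mul_iff₀ hε]
      have := ENNReal.toReal_mono (by finiteness) hab
      rw [ENNReal.toReal_add ha (by finiteness), ENNReal.toReal_mul,
        ENNReal.toReal_ofReal hε.le] at this
      linarith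
  have h_lim : Tendsto (fun ε => ((-(r ε).toReal : ℝ) : EReal)) (𝓝[>] 0) (𝓝 0) := by
    simpa using EReal.tendsto_coe.mpr ((ENNReal.tendsto_toReal zero_ne_top).comp hr).neg
  exact h_lim.liminf_eq.symm.le.trans (liminf_le_liminf h_bound)

section Comparison

variable {d : ℕ} {K : Ed d → ℝ} {p : Ed d} {ε : ℝ}

theorem J1eps_halfspace_ne_top (hK : Measurable K) (hKsum : Integrable (fun x => K x * ‖x‖))
    (hp : ‖p‖ = 1) (hε : 0 < ε) : J1eps K ε {x | 0 < ⟪x, p⟫} ≠ ∞ := by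
  have h_le : J1eps K ε {x | 0 < ⟪x, p⟫} ≤ 2⁻¹ * (ENNReal.ofReal (2 ^ d * ε) *
      ∫⁻ w in {w | 0 / ε ≤ ‖w‖}, ENNReal.ofReal (K w * ‖w‖)) := by
    rw [J1eps_eq_lintegral_shiftVariation hK ε (measurableSet_lt measurable_const (by fun_prop)),
      ← lintegral_ofReal_Keps_mul_indicator_norm hε]
    gcongr with z
    rw [Set.indicator_of_mem (show z ∈ {z : Ed d | 0 ≤ ‖z‖} from norm_nonneg z)]
    exact shiftVariation_halfspace_le_norm hp z
  refine ne_top_of_le_ne_top ?_ h_le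
  exact mul_ne_top (by simp) (mul_ne_top ofReal_ne_top
    ((setLIntegral_le_lintegral _ _).trans_lt hKsum.lintegral_lt_top).ne)

theorem J1eps_halfspace_le (hK : Measurable K) (hp : ‖p‖ = 1) {δ : ℝ} (hε : 0 < ε)
    {E : Set (Ed d)} (hE : MeasurableSet E)
    (hEH : symmDiff E {x | 0 < ⟪x, p⟫} ⊆ closedBall 0 (1 - δ)) :
    J1eps K ε {x | 0 < ⟪x, p⟫} ≤ J1eps K ε E + ENNReal.ofReal ε *
      (2⁻¹ * ENNReal.ofReal (2 ^ d) * ∫⁻ w in {w | δ / ε ≤ ‖w‖}, ENNReal.ofReal (K w * ‖w‖)) := by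
  set far : Ed d → ℝ≥0∞ := {z | δ ≤ ‖z‖}.indicator fun z => ENNReal.ofReal (2 ^ d * ‖z‖)
    with h_far_def
  have h_pt (z : Ed d) : shiftVariation {x | 0 < ⟪x, p⟫} z ≤ shiftVariation E z + far z := by
    by_cases hz : δ ≤ ‖z‖
    · rw [h_far_def, Set.indicator_of_mem (show z ∈ {z : Ed d | δ ≤ ‖z‖} from hz)]
      exact le_add_left (shiftVariation_halfspace_le_norm hp z)
    · rw [h_far_def, Set.indicator_of_notMem (show z ∉ {z : Ed d | δ ≤ ‖z‖} from hz), add_zero]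
      exact shiftVariation_halfspace_le_of_symmDiff_subset hE hEH (not_le.mp hz)
  have h_far : Measurable fun z => ENNReal.ofReal (Keps K ε z) * far z :=
    (measurable_Keps hK ε).ennreal_ofReal.mul
      ((by fun_prop : Measurable fun z : Ed d => ENNReal.ofReal (2 ^ d * ‖z‖)).indicator
        (measurableSet_le measurable_const measurable_norm))
  rw [J1eps_eq_lintegral_shiftVariation hK ε hE,
    J1eps_eq_lintegral_shiftVariation hK ε (measurableSet_lt measurable_const (by fun_prop))]
  calc 2⁻¹ * ∫⁻ z, ENNReal.ofReal (Keps K ε z) * shiftVariation {x | 0 < ⟪x, p⟫} z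
      ≤ 2⁻¹ * ∫⁻ z, (ENNReal.ofReal (Keps K ε z) * shiftVariation E z +
          ENNReal.ofReal (Keps K ε z) * far z) := by
        gcongr with z
        rw [← mul_add]
        gcongr
        exact h_pt z
    _ = 2⁻¹ * (∫⁻ z, ENNReal.ofReal (Keps K ε z) * shiftVariation E z) + ENNReal.ofReal ε *
          (2⁻¹ * ENNReal.ofReal (2 ^ d) *
            ∫⁻ w in {w | δ / ε ≤ ‖w‖}, ENNReal.ofReal (K w * ‖w‖)) := by
        rw [lintegral_add_right' _ h_far.aemeasurable, lintegral_ofReal_Keps_mul_indicator_norm hε,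
          ENNReal.ofReal_mul (by positivity)]
        ring

end Comparison

theorem liminf_J1eps_diff_nonneg_general
    {d : ℕ}
    (K : Ed d → ℝ) (hKmeas : Measurable K)
    (hKsum : Integrable (fun x : Ed d => K x * ‖x‖))
    (p : Ed d) (hp : ‖p‖ = 1)
    (δ : ℝ) (hδ : δ ∈ Set.Ioo (0 : ℝ) 1)
    (Efam : ℝ → Set (Ed d)) (hEmeas : ∀ ε, MeasurableSet (Efam ε))
    (hEH : ∀ ε, symmDiff (Efam ε) {x : Ed d | 0 < ⟪x, p⟫} ⊆
      Metric.closedBall (0 : Ed d) (1 - δ)) :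
    (0 : EReal) ≤ liminf (fun ε =>
        ((ε⁻¹ : ℝ) : EReal) *
          ((J1eps K ε (Efam ε) : EReal) - (J1eps K ε {x : Ed d | 0 < ⟪x, p⟫} : EReal)))
      (𝓝[>] 0) := by
  have h_tail : Tendsto (fun ε => ∫⁻ w in {w | δ / ε ≤ ‖w‖}, ENNReal.ofReal (K w * ‖w‖))
      (𝓝[>] 0) (𝓝 0) :=
    (tendsto_setLIntegral_le_norm_atTop hKsum.aemeasurable.ennreal_ofReal
      hKsum.lintegral_lt_top.ne).comp (tendsto_inv_nhdsGT_zero.const_mul_atTop hδ.1)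
  refine zero_le_liminf_inv_mul_sub (r := fun ε => 2⁻¹ * ENNReal.ofReal (2 ^ d) *
    ∫⁻ w in {w | δ / ε ≤ ‖w‖}, ENNReal.ofReal (K w * ‖w‖)) ?_ ?_ ?_
  · filter_upwards [self_mem_nhdsWithin] with ε hε using J1eps_halfspace_ne_top hKmeas hKsum hp hε
  · simpa using ENNReal.Tendsto.const_mul h_tail (.inr (by finiteness))
  · filter_upwards [self_mem_nhdsWithin] with ε hε using
      J1eps_halfspace_le hKmeas hp hε (hEmeas ε) (hEH ε)

/-- For families of sets converging in `L¹(B)` to the halfspace `H` and agreeing with `H`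
outside the closed ball of radius `1−δ`, the liminf of `ε⁻¹(J¹_ε(E_ε；B) − J¹_ε(H；B))` is
nonnegative. -/
theorem liminf_J1eps_diff_nonneg
    {d : ℕ} (hd : 1 ≤ d)
    (K : Ed d → ℝ) (hKmeas : Measurable K) (hKnonneg : ∀ x, 0 ≤ K x)
    (hKeven : ∀ᵐ x ∂(volume : Measure (Ed d)), K (-x) = K x)
    (hKsum : Integrable (fun x : Ed d => K x * ‖x‖))
    (p : Ed d) (hp : ‖p‖ = 1)
    (δ : ℝ) (hδ : δ ∈ Set.Ioo (0 : ℝ) 1)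
    (Efam : ℝ → Set (Ed d)) (hEmeas : ∀ ε, MeasurableSet (Efam ε))
    (hEH : ∀ ε, symmDiff (Efam ε) {x : Ed d | 0 < ⟪x, p⟫} ⊆
      Metric.closedBall (0 : Ed d) (1 - δ))
    (hconv : Tendsto (fun ε => ∫ x in Metric.ball (0 : Ed d) 1,
        |(Efam ε).indicator (fun _ => (1 : ℝ)) x -
          ({x : Ed d | 0 < ⟪x, p⟫}.indicator (fun _ => (1 : ℝ))) x|)
      (𝓝[>] 0) (𝓝 0)) :
    (0 : EReal) ≤ liminf (fun ε =>
        ((ε⁻¹ : ℝ) : EReal) *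
          ((J1eps K ε (Efam ε) : EReal) - (J1eps K ε {x : Ed d | 0 < ⟪x, p⟫} : EReal)))
      (𝓝[>] 0) :=
  liminf_J1eps_diff_nonneg_general K hKmeas hKsum p hp δ hδ Efam hEmeas hEH
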